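/- arXiv:1611.01203 — 2 statements merged into one kernel-verified Lean document; each statement's English description precedes it below -/
import Mathlib

section
/- Let k, d, n be natural numbers with k ≥ 1, d ≥ 0 and n ≥ 2. If n is odd, then δ(k,d,n) > 0 if and only if k < d + 1. -/
def delta (k d n : ℕ) : ℤ :=
  ∑ i ∈ Finset.range (n + 1), ∑ j ∈ Finset.range (n - i + 1),
    (Nat.choose (n + 1) (n - i - j) : ℤ) * (-(k : ℤ)) ^ j * ((d : ℤ) - 1) ^ i

open Finset

/-- Reindexing of the triangular double sum. -/
lemma delta_eq (k d n : ℕ) :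
    delta k d n = ∑ s ∈ range (n + 1), (Nat.choose (n + 1) (s + 1) : ℤ) *
      ∑ i ∈ range (s + 1), ((d : ℤ) - 1) ^ i * (-(k : ℤ)) ^ (s - i) := by
  unfold delta
  simp_rw [Finset.mul_sum]
  rw [Finset.sum_sigma', Finset.sum_sigma']
  refine Finset.sum_nbij' (fun p => ⟨p.1 + p.2, p.1⟩) (fun p => ⟨p.2, p.1 - p.2⟩)
    ?_ ?_ ?_ ?_ ?_
  · rintro ⟨i, j⟩ h
    simp only [Finset.mem_sigma, Finset.mem_range] at h ⊢
    omega
  · rintro ⟨s, i⟩ h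
    simp only [Finset.mem_sigma, Finset.mem_range] at h ⊢
    omega
  · rintro ⟨i, j⟩ h
    simp only [Finset.mem_sigma, Finset.mem_range] at h
    simp only [Sigma.mk.inj_iff, heq_eq_eq]
    exact ⟨trivial, by omega⟩
  · rintro ⟨s, i⟩ h
    simp only [Finset.mem_sigma, Finset.mem_range] at h
    simp only [Sigma.mk.inj_iff, heq_eq_eq]
    exact ⟨by omega, trivial⟩
  · rintro ⟨i, j⟩ h
    simp only [Finset.mem_sigma, Finset.mem_range] at h
    have h1 : n - i - j = (n + 1) - (i + j + 1) := by omega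
    rw [h1, Nat.choose_symm (by omega : i + j + 1 ≤ n + 1)]
    have h3 : i + j - i = j := by omega
    rw [h3]
    ring

/-- Binomial-type sum. -/
lemma binom_sum (n : ℕ) (x : ℤ) :
    ∑ s ∈ range (n + 1), (Nat.choose (n + 1) (s + 1) : ℤ) * x ^ (s + 1)
      = (x + 1) ^ (n + 1) - 1 := by
  have h := add_pow x 1 (n + 1)
  rw [Finset.sum_range_succ'] at h
  simp only [one_pow, mul_one, pow_zero, one_mul, Nat.choose_zero_right, Nat.cast_one] at h
  have hc : ∑ s ∈ range (n + 1), (Nat.choose (n + 1) (s + 1) : ℤ) * x ^ (s + 1)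
      = ∑ s ∈ range (n + 1), x ^ (s + 1) * (Nat.choose (n + 1) (s + 1) : ℤ) :=
    Finset.sum_congr rfl fun s _ => mul_comm _ _
  rw [hc, h]
  ring

/-- The key identity. -/
lemma delta_mul_key (k d n : ℕ) :
    delta k d n * ((d : ℤ) + k - 1)
      = (d : ℤ) ^ (n + 1) - (1 - (k : ℤ)) ^ (n + 1) := by
  rw [delta_eq, Finset.sum_mul]
  have step : ∀ s ∈ range (n + 1),
      (Nat.choose (n + 1) (s + 1) : ℤ) *
        (∑ i ∈ range (s + 1), ((d : ℤ) - 1) ^ i * (-(k : ℤ)) ^ (s - i)) * ((d : ℤ) + k - 1)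
      = (Nat.choose (n + 1) (s + 1) : ℤ) * (((d : ℤ) - 1) ^ (s + 1))
        - (Nat.choose (n + 1) (s + 1) : ℤ) * ((-(k : ℤ)) ^ (s + 1)) := by
    intro s _
    have h := geom_sum₂_mul ((d : ℤ) - 1) (-(k : ℤ)) (s + 1)
    simp only [Nat.add_sub_cancel] at h
    have heq : ((d : ℤ) - 1) - (-(k : ℤ)) = (d : ℤ) + k - 1 := by ring
    rw [heq] at h
    rw [mul_assoc, h]
    ring
  rw [Finset.sum_congr rfl step, Finset.sum_sub_distrib, binom_sum, binom_sum]
  ring_nf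

lemma delta_one_zero (n : ℕ) (hn : 1 ≤ n) : delta 1 0 n = 0 := by
  rw [delta_eq]
  have inner : ∀ s ∈ range (n + 1),
      (Nat.choose (n + 1) (s + 1) : ℤ) *
        ∑ i ∈ range (s + 1), (((0 : ℕ) : ℤ) - 1) ^ i * (-((1 : ℕ) : ℤ)) ^ (s - i)
      = ((n : ℤ) + 1) * ((-1) ^ s * (Nat.choose n s : ℤ)) := by
    intro s _
    have h1 : ∀ i ∈ range (s + 1),
        (((0 : ℕ) : ℤ) - 1) ^ i * (-((1 : ℕ) : ℤ)) ^ (s - i) = (-1 : ℤ) ^ s := by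
      intro i hi
      simp only [Finset.mem_range] at hi
      have hsum : i + (s - i) = s := by omega
      push_cast
      rw [← pow_add, hsum]
    rw [Finset.sum_congr rfl h1, Finset.sum_const, Finset.card_range, nsmul_eq_mul]
    have h2' : ((n : ℤ) + 1) * (Nat.choose n s : ℤ)
        = (Nat.choose (n + 1) (s + 1) : ℤ) * ((s : ℤ) + 1) := by
      exact_mod_cast Nat.add_one_mul_choose_eq n s
    push_cast
    linear_combination ((-1 : ℤ) ^ s) * h2'.symm
  rw [Finset.sum_congr rfl inner, ← Finset.mul_sum]
  have halt := Int.alternating_sum_range_choose_of_ne (n := n) (by omega)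
  rw [halt, mul_zero]

theorem delta_pos_iff_of_odd (k d n : ℕ) (hk : 1 ≤ k) (hn : 2 ≤ n) (hodd : Odd n) :
    0 < delta k d n ↔ k < d + 1 := by
  by_cases hkd : k = 1 ∧ d = 0
  · obtain ⟨hk1, hd0⟩ := hkd
    subst hk1; subst hd0
    rw [delta_one_zero n (by omega)]
    simp
  · have hM : 0 < (d : ℤ) + k - 1 := by
      have h2 : 2 ≤ d + k := by omega
      have : (2 : ℤ) ≤ (d : ℤ) + k := by exact_mod_cast h2
      omega
    have heven : Even (n + 1) := Odd.add_one hodd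
    have hneg : (1 - (k : ℤ)) ^ (n + 1) = ((k : ℤ) - 1) ^ (n + 1) := by
      rw [show (1 - (k : ℤ)) = -((k : ℤ) - 1) by ring, heven.neg_pow]
    have h0 : (0 : ℤ) ≤ (k : ℤ) - 1 := by
      have : (1 : ℤ) ≤ (k : ℤ) := by exact_mod_cast hk
      omega
    have key : 0 < delta k d n ↔ ((k : ℤ) - 1) ^ (n + 1) < (d : ℤ) ^ (n + 1) := by
      rw [← mul_pos_iff_of_pos_right hM, delta_mul_key, hneg, sub_pos]
    rw [key, pow_lt_pow_iff_left₀ h0 (by positivity) (by omega)]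
    constructor <;> intro h
    · have : (k : ℤ) < (d : ℤ) + 1 := by omega
      exact_mod_cast this
    · have : (k : ℤ) < (d : ℤ) + 1 := by exact_mod_cast h
      omega
end

section
/- Let k, d, n be natural numbers with k ≥ 1, d ≥ 0 and n ≥ 2. If n is odd, then δ(k,d,n) < 0 if and only if k > d + 1. -/
open Finset

lemma tri_sum {M : Type*} [AddCommMonoid M] (n : ℕ) (f : ℕ → ℕ → M) :
    ∑ i ∈ range (n + 1), ∑ j ∈ range (n - i + 1), f i j
      = ∑ s ∈ range (n + 1), ∑ i ∈ range (s + 1), f i (s - i) := by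
  induction n with
  | zero => simp
  | succ n ih =>
    have hL : ∑ i ∈ range (n + 2), ∑ j ∈ range (n + 1 - i + 1), f i j
        = (∑ i ∈ range (n + 1), ∑ j ∈ range (n - i + 1), f i j)
          + ∑ i ∈ range (n + 2), f i (n + 1 - i) := by
      rw [Finset.sum_range_succ (f := fun i => f i (n + 1 - i)),
        Finset.sum_range_succ (f := fun i => ∑ j ∈ range (n + 1 - i + 1), f i j)]
      have h1 : ∀ i ∈ range (n + 1), ∑ j ∈ range (n + 1 - i + 1), f i j
          = (∑ j ∈ range (n - i + 1), f i j) + f i (n + 1 - i) := by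
        intro i hi
        simp only [mem_range] at hi
        have h2 : n + 1 - i + 1 = (n - i + 1) + 1 := by omega
        have h3 : n - i + 1 = n + 1 - i := by omega
        rw [h2, Finset.sum_range_succ, h3]
      rw [Finset.sum_congr rfl h1, Finset.sum_add_distrib]
      simp [add_assoc]
    rw [hL, ih]
    conv_rhs => rw [Finset.sum_range_succ]

lemma aux_pow_sum (n : ℕ) (t : ℤ) :
    ∑ s ∈ range (n + 1), (Nat.choose (n + 1) (n - s) : ℤ) * t ^ (s + 1)
      = (1 + t) ^ (n + 1) - 1 := by
  rw [← Finset.sum_range_reflect]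
  simp only [Nat.add_sub_cancel]
  have h1 : ∀ s ∈ range (n + 1),
      (Nat.choose (n + 1) (n - (n - s)) : ℤ) * t ^ (n - s + 1)
        = (Nat.choose (n + 1) s : ℤ) * t ^ (n + 1 - s) := by
    intro s hs
    simp only [mem_range] at hs
    have h2 : n - (n - s) = s := by omega
    have h3 : n - s + 1 = n + 1 - s := by omega
    rw [h2, h3]
  rw [Finset.sum_congr rfl h1]
  have h4 := add_pow (1 : ℤ) t (n + 1)
  rw [Finset.sum_range_succ] at h4
  simp only [one_pow, one_mul, Nat.sub_self, pow_zero, Nat.choose_self, Nat.cast_one,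
    mul_one] at h4
  have : ∀ s ∈ range (n + 1), (Nat.choose (n + 1) s : ℤ) * t ^ (n + 1 - s)
      = t ^ (n + 1 - s) * (Nat.choose (n + 1) s : ℤ) := fun s _ => mul_comm _ _
  rw [Finset.sum_congr rfl this]
  linarith [h4]

lemma key_id (n : ℕ) (x y : ℤ) :
    (∑ i ∈ range (n + 1), ∑ j ∈ range (n - i + 1),
        (Nat.choose (n + 1) (n - i - j) : ℤ) * x ^ j * y ^ i) * (y - x)
      = (1 + y) ^ (n + 1) - (1 + x) ^ (n + 1) := by
  rw [tri_sum]
  have h1 : ∀ s ∈ range (n + 1),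
      ∑ i ∈ range (s + 1), (Nat.choose (n + 1) (n - i - (s - i)) : ℤ) * x ^ (s - i) * y ^ i
        = (Nat.choose (n + 1) (n - s) : ℤ) * ∑ i ∈ range (s + 1), y ^ i * x ^ (s + 1 - 1 - i) := by
    intro s hs
    simp only [mem_range] at hs
    rw [Finset.mul_sum]
    refine Finset.sum_congr rfl fun i hi => ?_
    simp only [mem_range] at hi
    have h2 : n - i - (s - i) = n - s := by omega
    have h3 : s + 1 - 1 - i = s - i := by omega
    rw [h2, h3]; ring
  rw [Finset.sum_congr rfl h1, Finset.sum_mul]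
  have h4 : ∀ s ∈ range (n + 1),
      (Nat.choose (n + 1) (n - s) : ℤ) * (∑ i ∈ range (s + 1), y ^ i * x ^ (s + 1 - 1 - i)) * (y - x)
        = (Nat.choose (n + 1) (n - s) : ℤ) * y ^ (s + 1)
          - (Nat.choose (n + 1) (n - s) : ℤ) * x ^ (s + 1) := by
    intro s _
    rw [mul_assoc, geom_sum₂_mul, mul_sub]
  rw [Finset.sum_congr rfl h4, Finset.sum_sub_distrib, aux_pow_sum, aux_pow_sum]
  ring

lemma zero_case (n : ℕ) (hn : 1 ≤ n) :
    ∑ i ∈ range (n + 1), ∑ j ∈ range (n - i + 1),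
        (Nat.choose (n + 1) (n - i - j) : ℤ) * (-1) ^ j * (-1) ^ i = 0 := by
  rw [tri_sum]
  have h1 : ∀ s ∈ range (n + 1),
      ∑ i ∈ range (s + 1), (Nat.choose (n + 1) (n - i - (s - i)) : ℤ) * (-1 : ℤ) ^ (s - i) * (-1) ^ i
        = (Nat.choose (n + 1) (n - s) : ℤ) * (s + 1) * (-1) ^ s := by
    intro s hs
    simp only [mem_range] at hs
    have h2 : ∀ i ∈ range (s + 1),
        (Nat.choose (n + 1) (n - i - (s - i)) : ℤ) * (-1 : ℤ) ^ (s - i) * (-1) ^ i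
          = (Nat.choose (n + 1) (n - s) : ℤ) * (-1) ^ s := by
      intro i hi
      simp only [mem_range] at hi
      have h3 : n - i - (s - i) = n - s := by omega
      have h4 : (-1 : ℤ) ^ (s - i) * (-1) ^ i = (-1) ^ s := by
        rw [← pow_add]; congr 1; omega
      rw [h3, mul_assoc, h4]
    rw [Finset.sum_congr rfl h2, Finset.sum_const, card_range, nsmul_eq_mul]
    push_cast; ring
  rw [Finset.sum_congr rfl h1, ← Finset.sum_range_reflect]
  simp only [Nat.add_sub_cancel]
  have h5 : ∀ m ∈ range (n + 1),
      (Nat.choose (n + 1) (n - (n - m)) : ℤ) * (↑(n - m) + 1) * (-1) ^ (n - m)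
        = (n + 1 : ℤ) * ((1 : ℤ) ^ m * (-1) ^ (n - m) * (Nat.choose n m : ℤ)) := by
    intro m hm
    simp only [mem_range] at hm
    have h2 : n - (n - m) = m := by omega
    have h6 : (Nat.choose (n + 1) m : ℤ) * (↑(n - m) + 1) = (n + 1 : ℤ) * Nat.choose n m := by
      have := Nat.choose_mul_succ_eq n m
      have h7 : (↑(n - m) : ℤ) + 1 = ((n + 1 - m : ℕ) : ℤ) := by omega
      rw [h7, ← Nat.cast_mul, mul_comm ((n:ℤ)+1), ← Nat.cast_succ, ← Nat.cast_mul, this]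
    rw [h2, mul_comm ((Nat.choose (n+1) m : ℤ)) _, ← mul_assoc, mul_comm _ ((Nat.choose (n+1) m : ℤ)), h6]
    ring
  rw [Finset.sum_congr rfl h5, ← Finset.mul_sum, ← add_pow (1 : ℤ) (-1) n]
  simp [zero_pow (by omega : n ≠ 0)]

theorem delta_neg_iff_of_odd (k d n : ℕ) (hk : 1 ≤ k) (hn : 2 ≤ n) (hodd : Odd n) :
    delta k d n < 0 ↔ d + 1 < k := by
  have heven : Even (n + 1) := Odd.add_one hodd
  have hkey := key_id n (-(k : ℤ)) ((d : ℤ) - 1)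
  have hsimp : (1 : ℤ) + ((d : ℤ) - 1) = d := by ring
  have hsimp2 : ((1 : ℤ) + -(k : ℤ)) ^ (n + 1) = ((k : ℤ) - 1) ^ (n + 1) := by
    have : (1 : ℤ) + -(k : ℤ) = -((k : ℤ) - 1) := by ring
    rw [this, heven.neg_pow]
  rw [hsimp, hsimp2] at hkey
  have hkey' : delta k d n * ((d : ℤ) + k - 1) = (d : ℤ) ^ (n + 1) - ((k : ℤ) - 1) ^ (n + 1) := by
    have : (d : ℤ) - 1 - -(k : ℤ) = (d : ℤ) + k - 1 := by ring
    rw [← this, ← hkey]; rfl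
  by_cases h0 : (d : ℤ) + k - 1 = 0
  · have hd : d = 0 := by omega
    have hk1 : k = 1 := by omega
    subst hd; subst hk1
    have hz : delta 1 0 n = 0 := by
      have := zero_case n (by omega)
      unfold delta
      simpa using this
    rw [hz]
    simp
  · have hc : (0 : ℤ) < (d : ℤ) + k - 1 := by
      have : (1 : ℤ) ≤ (k : ℤ) := by exact_mod_cast hk
      omega
    constructor
    · intro h
      by_contra hcon
      push_neg at hcon
      have h1 : ((k : ℤ) - 1) ≤ (d : ℤ) := by omega
      have h2 : (0 : ℤ) ≤ (k : ℤ) - 1 := by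
        have : (1 : ℤ) ≤ (k : ℤ) := by exact_mod_cast hk
        omega
      have h3 : ((k : ℤ) - 1) ^ (n + 1) ≤ (d : ℤ) ^ (n + 1) := pow_le_pow_left₀ h2 h1 _
      have h4 : delta k d n * ((d : ℤ) + k - 1) < 0 := mul_neg_of_neg_of_pos h hc
      rw [hkey'] at h4
      omega
    · intro h
      have h1 : (d : ℤ) < (k : ℤ) - 1 := by
        have : ((d : ℤ) + 1) < (k : ℤ) := by exact_mod_cast h
        omega
      have h3 : (d : ℤ) ^ (n + 1) < ((k : ℤ) - 1) ^ (n + 1) :=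
        pow_lt_pow_left₀ h1 (by positivity) (by omega)
      by_contra hcon
      push_neg at hcon
      have h4 : 0 ≤ delta k d n * ((d : ℤ) + k - 1) := mul_nonneg hcon hc.le
      rw [hkey'] at h4
      omega
end
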